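/- Let (V,*) be a magmatic algebra and x₁,…,x_k ∈ V. For a subset I = {i₁ < … < i_p} ⊆ {1,…,k} put x_I^* = (…((x_{i₁}*x_{i₂})*x_{i₃})*…)*x_{i_p} ∈ V, and for a partition P = {P₁,…,P_p} of {1,…,k} with min(P₁)<…<min(P_p), put x_P^* = x_{P₁}^* ⋯ x_{P_p}^* ∈ V^{⊗p}. Then φ_*(x₁⋯x_k) = x₁ ⊛ ⋯ ⊛ x_k = Σ_{P partition of {1,…,k}} x_P^*. -/

import Mathlib

open scoped TensorProduct

noncomputable section

variable (K V : Type*) [Field K] [AddCommGroup V] [Module K V]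

/-- The deshuffling coproduct on the tensor algebra: the unique algebra morphism
sending `x : V` to `x ⊗ 1 + 1 ⊗ x`. -/
def deshuffle : TensorAlgebra K V →ₐ[K]
    TensorAlgebra K V ⊗[K] TensorAlgebra K V :=
  TensorAlgebra.lift K
    (((TensorProduct.mk K (TensorAlgebra K V) (TensorAlgebra K V)).flip 1) ∘ₗ TensorAlgebra.ι K
      + (TensorProduct.mk K (TensorAlgebra K V) (TensorAlgebra K V) 1) ∘ₗ TensorAlgebra.ι K)

/-- The counit of the tensor algebra: the algebra morphism killing `V`. -/
def tensorCounit : TensorAlgebra K V →ₐ[K] K :=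
  TensorAlgebra.lift K (0 : V →ₗ[K] K)

variable {K V}

/-- `star` is the canonical extension to `T(V)` of the magmatic product `m` on `V`:
(i) `f*1 = f`; (ii) `1*f = ε(f)1`; (iii) `x*(fy) = (x*f)*y − x*(f*y)`;
(iv) `(fg)*h = Σ (f*h⁽¹⁾)(g*h⁽²⁾)`, and `star` restricted to `V` is `m`. -/
def IsMagExt (m : V →ₗ[K] V →ₗ[K] V)
    (star : TensorAlgebra K V →ₗ[K] TensorAlgebra K V →ₗ[K] TensorAlgebra K V) : Prop :=
  (∀ x y : V, star (TensorAlgebra.ι K x) (TensorAlgebra.ι K y) = TensorAlgebra.ι K (m x y)) ∧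
  (∀ f, star f 1 = f) ∧
  (∀ f, star 1 f = (tensorCounit K V f) • 1) ∧
  (∀ (x : V) (f : TensorAlgebra K V) (y : V),
    star (TensorAlgebra.ι K x) (f * TensorAlgebra.ι K y)
      = star (star (TensorAlgebra.ι K x) f) (TensorAlgebra.ι K y)
        - star (TensorAlgebra.ι K x) (star f (TensorAlgebra.ι K y))) ∧
  (∀ f g h, star (f * g) h
      = LinearMap.mul' K (TensorAlgebra K V)
          (TensorProduct.map (star f) (star g) (deshuffle K V h)))


/-- The product `f ⊛ g = Σ (f*g⁽¹⁾) g⁽²⁾` on `T(V)`, as a bilinear map. -/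
def circLM (star : TensorAlgebra K V →ₗ[K] TensorAlgebra K V →ₗ[K] TensorAlgebra K V) :
    TensorAlgebra K V →ₗ[K] TensorAlgebra K V →ₗ[K] TensorAlgebra K V where
  toFun f := LinearMap.mul' K (TensorAlgebra K V)
      ∘ₗ LinearMap.rTensor (TensorAlgebra K V) (star f)
      ∘ₗ (deshuffle K V).toLinearMap
  map_add' f g := by ext h; simp [LinearMap.rTensor_add]
  map_smul' c f := by ext h; simp [LinearMap.rTensor_smul]


variable {k : ℕ}

/-- `x_J^* = (…((x_{j₁}*x_{j₂})*x_{j₃})…)*x_{j_p}` for `J = {j₁ < … < j_p}`. -/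
def nestStar (m : V →ₗ[K] V →ₗ[K] V) (x : Fin k → V) (J : Finset (Fin k)) : V :=
  match J.sort (· ≤ ·) with
  | [] => 0
  | a :: l => l.foldl (fun v j => m v (x j)) (x a)

/-- The word `x_P^* = x_{P₁}^* ⋯ x_{P_p}^*` of a family of parts, the parts being
ordered by their minima. -/
def partitionWord (m : V →ₗ[K] V →ₗ[K] V) (x : Fin k → V)
    (parts : Finset (Finset (Fin k))) : TensorAlgebra K V :=
  (((List.finRange k).flatMap fun i =>
      (parts.filter fun J => J.min = (i : WithTop (Fin k))).toList).map
    fun J => TensorAlgebra.ι K (nestStar m x J)).prod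

/-- `parts` is a partition of `{1,…,k}`. -/
def IsSetPartition (parts : Finset (Finset (Fin k))) : Prop :=
  ∅ ∉ parts ∧ parts.sup id = Finset.univ ∧
    ∀ J ∈ parts, ∀ J' ∈ parts, J ≠ J' → Disjoint J J'

/-!
Because `Δ x = x ⊗ 1 + 1 ⊗ x` and `f * 1 = f`, one has `f ⊛ x = f * x + f x` for `x ∈ V`, and
by (ii) and (iv) `f ↦ f * x` is a derivation of the concatenation product vanishing at `1`. So if
`a` exceeds every element of `S`, then `x_P^* ⊛ x_a` is the sum of the words in which `x_a` is
appended to one block `J` of `P` (`x_J^* * x_a = x_{J ∪ {a}}^*`, and the block keeps its minimum,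
hence its place), plus the word with the new block `{a}` at the end. Each partition of `S ∪ {a}`
arises exactly once in this way, so by induction `x₁ ⊛ ⋯ ⊛ x_k = Σ_P x_P^*`. Finally
`φ_*(x₁⋯x_k) = x₁ ⊛ ⋯ ⊛ x_k` because `φ_*` is multiplicative and fixes `V`.
-/

section StarOnV

open TensorAlgebra

@[simp]
lemma deshuffle_ι (x : V) : deshuffle K V (ι K x) = ι K x ⊗ₜ[K] 1 + 1 ⊗ₜ[K] ι K x := by
  simp [deshuffle]

@[simp]
lemma tensorCounit_ι (x : V) : tensorCounit K V (ι K x) = 0 := by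
  simp [tensorCounit]

lemma map_prod_eq_foldl_circLM
    {star : TensorAlgebra K V →ₗ[K] TensorAlgebra K V →ₗ[K] TensorAlgebra K V}
    {φ : TensorAlgebra K V →ₗ[K] TensorAlgebra K V} (hφ1 : φ 1 = 1)
    (hφm : ∀ f g : TensorAlgebra K V, φ (f * g) = circLM star (φ f) (φ g))
    (l : List (TensorAlgebra K V)) :
    φ l.prod = (l.map φ).foldl (fun acc y => circLM star acc y) 1 := by
  induction l using List.reverseRecOn with
  | nil => simpa using hφ1
  | append_singleton l f ih => simp [List.prod_append, hφm, ih]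

namespace IsMagExt

variable {m : V →ₗ[K] V →ₗ[K] V}
  {star : TensorAlgebra K V →ₗ[K] TensorAlgebra K V →ₗ[K] TensorAlgebra K V}

lemma circLM_ι (hstar : IsMagExt m star) (f : TensorAlgebra K V) (y : V) :
    circLM star f (ι K y) = star f (ι K y) + f * ι K y := by
  simp [circLM, hstar.2.1]

lemma star_one_ι (hstar : IsMagExt m star) (y : V) : star 1 (ι K y) = 0 := by
  simp [hstar.2.2.1]

lemma star_mul_ι (hstar : IsMagExt m star) (f g : TensorAlgebra K V) (y : V) :
    star (f * g) (ι K y) = star f (ι K y) * g + f * star g (ι K y) := by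
  simp [hstar.2.2.2.2, hstar.2.1]

lemma star_prod_ι (hstar : IsMagExt m star) {β : Type*} [DecidableEq β] {l : List β}
    (hl : l.Nodup) (g : β → V) (y : V) :
    star (l.map fun b => ι K (g b)).prod (ι K y)
      = ∑ b ∈ l.toFinset, (l.map fun c => ι K (Function.update g b (m (g b) y) c)).prod := by
  induction l with
  | nil => simp [hstar.star_one_ι]
  | cons a l ih =>
    obtain ⟨ha, hl⟩ := List.nodup_cons.1 hl
    have hrest :
        (l.map fun c => ι K (Function.update g a (m (g a) y) c)) = l.map fun c => ι K (g c) :=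
      List.map_congr_left fun c hc => by rw [Function.update_of_ne (ne_of_mem_of_not_mem hc ha)]
    rw [List.toFinset_cons, Finset.sum_insert (by simpa using ha)]
    simp only [List.map_cons, List.prod_cons, hstar.star_mul_ι, hstar.1, ih hl, Finset.mul_sum,
      Function.update_self, hrest]
    congr 1
    refine Finset.sum_congr rfl fun b hb => ?_
    rw [Function.update_of_ne (ne_of_mem_of_not_mem (List.mem_toFinset.1 hb) ha).symm]

end IsMagExt

end StarOnV

section SetPartition

variable {α : Type*} [DecidableEq α]

-- `IsSetPartition P` unfolds to `IsSetPartitionOf Finset.univ P`.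
def IsSetPartitionOf (S : Finset α) (P : Finset (Finset α)) : Prop :=
  ∅ ∉ P ∧ P.sup id = S ∧ ∀ J ∈ P, ∀ J' ∈ P, J ≠ J' → Disjoint J J'

namespace IsSetPartitionOf

variable {S : Finset α} {P : Finset (Finset α)} {C D : Finset α} {i : α}

lemma nonempty (hP : IsSetPartitionOf S P) (hC : C ∈ P) : C.Nonempty :=
  Finset.nonempty_iff_ne_empty.2 fun h => hP.1 (h ▸ hC)

lemma subset (hP : IsSetPartitionOf S P) (hC : C ∈ P) : C ⊆ S :=
  hP.2.1 ▸ Finset.le_sup (f := id) hC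

lemma exists_mem (hP : IsSetPartitionOf S P) (hi : i ∈ S) : ∃ C ∈ P, i ∈ C :=
  Finset.mem_sup.1 (hP.2.1 ▸ hi)

lemma eq_of_mem (hP : IsSetPartitionOf S P) (hC : C ∈ P) (hD : D ∈ P) (hiC : i ∈ C)
    (hiD : i ∈ D) : C = D := by
  by_contra h
  exact Finset.disjoint_left.1 (hP.2.2 C hC D hD h) hiC hiD

lemma of_mem (hne : ∀ C ∈ P, C.Nonempty) (hsub : ∀ C ∈ P, C ⊆ S)
    (hcov : ∀ i ∈ S, ∃ C ∈ P, i ∈ C)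
    (huniq : ∀ C ∈ P, ∀ D ∈ P, ∀ i ∈ C, i ∈ D → C = D) : IsSetPartitionOf S P := by
  refine ⟨fun h => Finset.not_nonempty_empty (hne ∅ h), ?_, ?_⟩
  · refine le_antisymm (Finset.sup_le hsub) fun i hi => ?_
    obtain ⟨C, hC, hiC⟩ := hcov i hi
    exact Finset.mem_sup (f := id).2 ⟨C, hC, hiC⟩
  · intro C hC D hD hCD
    exact Finset.disjoint_left.2 fun i hiC hiD => hCD (huniq C hC D hD i hiC hiD)

end IsSetPartitionOf

lemma isSetPartitionOf_empty_iff {P : Finset (Finset α)} :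
    IsSetPartitionOf ∅ P ↔ P = ∅ := by
  refine ⟨fun hP => Finset.eq_empty_of_forall_notMem fun C hC => ?_, ?_⟩
  · obtain ⟨i, hi⟩ := hP.nonempty hC
    exact Finset.notMem_empty i (hP.subset hC hi)
  · rintro rfl
    exact ⟨Finset.notMem_empty _, rfl, by simp⟩

/-- Add `a` to the block `J` of `P`, or as a new singleton block when `J = ∅`. -/
def extendPartition (a : α) (P : Finset (Finset α)) (J : Finset α) : Finset (Finset α) :=
  insert (insert a J) (P.erase J)

variable {S : Finset α} {P : Finset (Finset α)} {J : Finset α} {a : α}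

lemma IsSetPartitionOf.subset_of_mem_insert_empty (hP : IsSetPartitionOf S P)
    (hJ : J ∈ insert ∅ P) : J ⊆ S := by
  rcases Finset.mem_insert.1 hJ with rfl | hJ
  exacts [Finset.empty_subset S, hP.subset hJ]

lemma IsSetPartitionOf.extend (hP : IsSetPartitionOf S P) (ha : a ∉ S)
    (hJ : J ∈ insert ∅ P) : IsSetPartitionOf (insert a S) (extendPartition a P J) := by
  have hJS := hP.subset_of_mem_insert_empty hJ
  have hmem : ∀ {C}, C ∈ extendPartition a P J ↔ C = insert a J ∨ C ≠ J ∧ C ∈ P := by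
    simp [extendPartition]
  refine .of_mem (fun C hC => ?_) (fun C hC => ?_) (fun i hi => ?_) fun C hC D hD i hiC hiD => ?_
  · rcases hmem.1 hC with rfl | ⟨-, hC⟩
    exacts [Finset.insert_nonempty _ _, hP.nonempty hC]
  · rcases hmem.1 hC with rfl | ⟨-, hC⟩
    exacts [Finset.insert_subset_insert a hJS, (hP.subset hC).trans (Finset.subset_insert a S)]
  · rcases Finset.mem_insert.1 hi with rfl | hi
    · exact ⟨_, hmem.2 (.inl rfl), Finset.mem_insert_self i J⟩
    obtain ⟨C, hC, hiC⟩ := hP.exists_mem hi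
    by_cases hCJ : C = J
    · exact ⟨_, hmem.2 (.inl rfl), Finset.mem_insert_of_mem (hCJ ▸ hiC)⟩
    · exact ⟨C, hmem.2 (.inr ⟨hCJ, hC⟩), hiC⟩
  have key : ∀ D, D ≠ J → D ∈ P → i ∈ insert a J → i ∈ D → False := by
    intro D hDJ hD hiJ hiD
    have hia : i ≠ a := fun h => ha (h ▸ hP.subset hD hiD)
    have hiJ : i ∈ J := (Finset.mem_insert.1 hiJ).resolve_left hia
    exact hDJ (hP.eq_of_mem hD ((Finset.mem_insert.1 hJ).resolve_left
      (Finset.ne_empty_of_mem hiJ)) hiD hiJ)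
  rcases hmem.1 hC with rfl | ⟨hCJ, hC⟩ <;> rcases hmem.1 hD with rfl | ⟨hDJ, hD⟩
  · rfl
  · exact (key D hDJ hD hiC hiD).elim
  · exact (key C hCJ hC hiD hiC).elim
  · exact hP.eq_of_mem hC hD hiC hiD

end SetPartition

section SetPartitionBijection

variable {α : Type*} [DecidableEq α] {S : Finset α} {P Q : Finset (Finset α)} {J : Finset α}
  {a : α}

namespace IsSetPartitionOf

lemma eq_insert_of_mem_extendPartition (hP : IsSetPartitionOf S P) (ha : a ∉ S)
    {C : Finset α} (hC : C ∈ extendPartition a P J) (haC : a ∈ C) : C = insert a J := by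
  rcases Finset.mem_insert.1 hC with rfl | hC
  exacts [rfl, (ha (hP.subset (Finset.mem_of_mem_erase hC) haC)).elim]

lemma erase_insert_empty_insert_erase (hP : IsSetPartitionOf S P) (hJ : J ∈ insert ∅ P) :
    (insert J (P.erase J)).erase ∅ = P := by
  rcases Finset.mem_insert.1 hJ with rfl | hJ
  · rw [Finset.erase_eq_of_notMem hP.1, Finset.erase_insert hP.1]
  · rw [Finset.insert_erase hJ, Finset.erase_eq_of_notMem hP.1]

lemma extendPartition_injOn (ha : a ∉ S) :
    Set.InjOn (fun σ : (_ : Finset (Finset α)) × Finset α => extendPartition a σ.1 σ.2)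
      {σ | IsSetPartitionOf S σ.1 ∧ σ.2 ∈ insert ∅ σ.1} := by
  rintro ⟨P, J⟩ ⟨hP, hJ⟩ ⟨P', J'⟩ ⟨hP', hJ'⟩
    (h : extendPartition a P J = extendPartition a P' J')
  dsimp only at hP hJ hP' hJ'
  have hJJ' : J = J' := by
    have hins : insert a J = insert a J' := hP'.eq_insert_of_mem_extendPartition ha
      (h ▸ Finset.mem_insert_self _ _) (Finset.mem_insert_self a J)
    have hnot : ∀ {P J}, IsSetPartitionOf S P → J ∈ insert ∅ P → a ∉ J :=
      fun hP hJ haJ => ha (hP.subset_of_mem_insert_empty hJ haJ)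
    rw [← Finset.erase_insert (hnot hP hJ), hins, Finset.erase_insert (hnot hP' hJ')]
  subst hJJ'
  have hrecover : ∀ {P}, IsSetPartitionOf S P → J ∈ insert ∅ P →
      (insert J ((extendPartition a P J).erase (insert a J))).erase ∅ = P := by
    intro P hP hJ
    have hnotin : insert a J ∉ P.erase J := fun h =>
      ha (hP.subset (Finset.mem_of_mem_erase h) (Finset.mem_insert_self a J))
    rw [extendPartition, Finset.erase_insert hnotin, hP.erase_insert_empty_insert_erase hJ]
  rw [← hrecover hP hJ, h, hrecover hP' hJ']

lemma erase_block (hQ : IsSetPartitionOf (insert a S) Q) (ha : a ∉ S) {B : Finset α}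
    (hB : B ∈ Q) (haB : a ∈ B) :
    IsSetPartitionOf S ((insert (B.erase a) (Q.erase B)).erase ∅) := by
  have hmem : ∀ {C}, C ∈ (insert (B.erase a) (Q.erase B)).erase ∅ ↔
      C ≠ ∅ ∧ (C = B.erase a ∨ C ≠ B ∧ C ∈ Q) := by
    simp
  refine .of_mem (fun C hC => ?_) (fun C hC => ?_) (fun i hi => ?_)
    fun C hC D hD i hiC hiD => ?_
  · exact Finset.nonempty_iff_ne_empty.2 (hmem.1 hC).1
  · rcases (hmem.1 hC).2 with rfl | ⟨hCB, hC⟩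
    · rw [← Finset.erase_insert ha]
      exact Finset.erase_subset_erase a (hQ.subset hB)
    · intro i hiC
      have hia : i ≠ a := fun h => hCB (hQ.eq_of_mem hC hB (h ▸ hiC) haB)
      exact (Finset.mem_insert.1 (hQ.subset hC hiC)).resolve_left hia
  · have hia : i ≠ a := fun h => ha (h ▸ hi)
    obtain ⟨C, hC, hiC⟩ := hQ.exists_mem (Finset.mem_insert_of_mem hi)
    by_cases hCB : C = B
    · subst hCB
      exact ⟨C.erase a, hmem.2 ⟨Finset.ne_empty_of_mem (Finset.mem_erase.2 ⟨hia, hiC⟩),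
        .inl rfl⟩, Finset.mem_erase.2 ⟨hia, hiC⟩⟩
    · exact ⟨C, hmem.2 ⟨Finset.ne_empty_of_mem hiC, .inr ⟨hCB, hC⟩⟩, hiC⟩
  · have hsplit : ∀ {D}, D ≠ B → D ∈ Q → i ∈ B.erase a → i ∈ D → False :=
      fun hDB hD hiJ hiD => hDB (hQ.eq_of_mem hD hB hiD (Finset.mem_of_mem_erase hiJ))
    rcases (hmem.1 hC).2 with rfl | ⟨hCB, hC⟩ <;> rcases (hmem.1 hD).2 with rfl | ⟨hDB, hD⟩
    · rfl
    · exact (hsplit hDB hD hiC hiD).elim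
    · exact (hsplit hCB hC hiD hiC).elim
    · exact hQ.eq_of_mem hC hD hiC hiD

lemma exists_extendPartition_eq (hQ : IsSetPartitionOf (insert a S) Q) (ha : a ∉ S) :
    ∃ P J, IsSetPartitionOf S P ∧ J ∈ insert ∅ P ∧ extendPartition a P J = Q := by
  obtain ⟨B, hB, haB⟩ := hQ.exists_mem (Finset.mem_insert_self a S)
  refine ⟨_, B.erase a, hQ.erase_block ha hB haB, ?_, ?_⟩
  · by_cases hJ : B.erase a = ∅
    · exact hJ ▸ Finset.mem_insert_self _ _
    · exact Finset.mem_insert_of_mem (Finset.mem_erase.2 ⟨hJ, Finset.mem_insert_self _ _⟩)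
  · have hJQ : B.erase a ∉ Q.erase B := fun h => by
      obtain ⟨i, hi⟩ := hQ.nonempty (Finset.mem_of_mem_erase h)
      exact Finset.ne_of_mem_erase h (hQ.eq_of_mem (Finset.mem_of_mem_erase h) hB hi
        (Finset.mem_of_mem_erase hi))
    have hQB : ∅ ∉ Q.erase B := fun h => hQ.1 (Finset.mem_of_mem_erase h)
    rw [extendPartition, Finset.insert_erase haB, Finset.erase_right_comm,
      Finset.erase_insert hJQ, Finset.erase_eq_of_notMem hQB, Finset.insert_erase hB]

end IsSetPartitionOf

open Classical in
theorem sum_setPartitions_insert [Fintype α] {M : Type*} [AddCommMonoid M] (ha : a ∉ S)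
    (f : Finset (Finset α) → M) :
    ∑ P ∈ Finset.univ.filter (IsSetPartitionOf S), ∑ J ∈ insert ∅ P, f (extendPartition a P J)
      = ∑ Q ∈ Finset.univ.filter (IsSetPartitionOf (insert a S)), f Q := by
  rw [Finset.sum_sigma']
  refine Finset.sum_nbij (fun σ => extendPartition a σ.1 σ.2) (fun σ hσ => ?_)
    ((IsSetPartitionOf.extendPartition_injOn ha).mono fun σ hσ => ?_) (fun Q hQ => ?_)
    fun _ _ => rfl
  · simp only [Finset.mem_sigma, Finset.mem_filter, Finset.mem_univ, true_and] at hσ ⊢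
    exact hσ.1.extend ha hσ.2
  · simpa using hσ
  · obtain ⟨P, J, hP, hJ, rfl⟩ :=
      IsSetPartitionOf.exists_extendPartition_eq (by simpa using hQ) ha
    exact ⟨⟨P, J⟩, Finset.mem_sigma.2 ⟨by simpa using hP, hJ⟩, rfl⟩

end SetPartitionBijection

section LinearOrder

variable {α : Type*} [LinearOrder α] {B : Finset α} {a : α}

lemma Finset.min_insert_of_forall_lt (hB : B.Nonempty) (h : ∀ b ∈ B, b < a) :
    (insert a B).min = B.min := by
  obtain ⟨b, hb⟩ := Finset.min_of_nonempty hB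
  rw [Finset.min_insert, hb]
  exact min_eq_right (WithTop.coe_le_coe.2 (h b (Finset.mem_of_min hb)).le)

lemma Finset.sort_insert_of_forall_lt (h : ∀ b ∈ B, b < a) :
    (insert a B).sort = B.sort ++ [a] := by
  refine List.Pairwise.eq_of_mem_iff (Finset.sortedLT_sort _).pairwise
    (List.pairwise_append.2 ⟨(Finset.sortedLT_sort B).pairwise, List.pairwise_singleton _ _,
      fun b hb c hc => List.mem_singleton.1 hc ▸ h b ((Finset.mem_sort _).1 hb)⟩) fun c => ?_
  simp [or_comm]

end LinearOrder

section OrderedBlocks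

variable {S : Finset (Fin k)} {P : Finset (Finset (Fin k))} {a : Fin k}

def orderedBlocks (P : Finset (Finset (Fin k))) : List (Finset (Fin k)) :=
  (List.finRange k).flatMap fun i : Fin k =>
    (P.filter fun J => J.min = (i : WithTop (Fin k))).toList

lemma mem_orderedBlocks (hP : ∅ ∉ P) {C : Finset (Fin k)} : C ∈ orderedBlocks P ↔ C ∈ P := by
  simp only [orderedBlocks, List.mem_flatMap, Finset.mem_toList, Finset.mem_filter,
    List.mem_finRange, true_and]
  refine ⟨fun ⟨_, hC, _⟩ => hC, fun hC => ?_⟩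
  obtain ⟨b, hb⟩ := Finset.min_of_nonempty (Finset.nonempty_iff_ne_empty.2 fun h => hP (h ▸ hC))
  exact ⟨b, hC, hb⟩

lemma nodup_of_pairwise_min_lt {L : List (Finset (Fin k))}
    (hL : L.Pairwise fun C D => C.min < D.min) : L.Nodup :=
  hL.imp fun h e => h.ne (congrArg _ e)

namespace IsSetPartitionOf

lemma pairwise_orderedBlocks (hP : IsSetPartitionOf S P) :
    (orderedBlocks P).Pairwise fun C D => C.min < D.min := by
  refine List.pairwise_flatMap.2 ⟨fun i _ => ?_, ?_⟩
  · refine (Finset.nodup_toList _).imp_of_mem fun hC hD hCD => (hCD ?_).elim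
    simp only [Finset.mem_toList, Finset.mem_filter] at hC hD
    exact hP.eq_of_mem hC.1 hD.1 (Finset.mem_of_min hC.2) (Finset.mem_of_min hD.2)
  · refine (List.pairwise_lt_finRange k).imp ?_
    intro i j hij C hC D hD
    simp only [Finset.mem_toList, Finset.mem_filter] at hC hD
    rw [hC.2, hD.2]
    exact WithTop.coe_lt_coe.2 hij

lemma orderedBlocks_eq (hP : IsSetPartitionOf S P) {L : List (Finset (Fin k))}
    (hL : L.Pairwise fun C D => C.min < D.min) (hmem : ∀ C, C ∈ L ↔ C ∈ P) :
    orderedBlocks P = L := by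
  refine List.Perm.eq_of_pairwise (fun _ _ _ _ h h' => (lt_asymm h h').elim)
    hP.pairwise_orderedBlocks hL ?_
  exact (List.perm_ext_iff_of_nodup (nodup_of_pairwise_min_lt hP.pairwise_orderedBlocks)
    (nodup_of_pairwise_min_lt hL)).2
    fun C => (mem_orderedBlocks hP.1).trans (hmem C).symm

lemma toFinset_orderedBlocks (hP : IsSetPartitionOf S P) : (orderedBlocks P).toFinset = P := by
  ext C
  simp [mem_orderedBlocks hP.1]

lemma orderedBlocks_extendPartition_empty (hP : IsSetPartitionOf S P) (hS : ∀ b ∈ S, b < a) :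
    orderedBlocks (extendPartition a P ∅) = orderedBlocks P ++ [{a}] := by
  have hQ := hP.extend (fun h => lt_irrefl a (hS a h)) (Finset.mem_insert_self ∅ P)
  refine hQ.orderedBlocks_eq (List.pairwise_append.2 ⟨hP.pairwise_orderedBlocks,
    List.pairwise_singleton _ _, fun C hC D hD => ?_⟩) fun C => ?_
  · obtain ⟨b, hb⟩ := Finset.min_of_nonempty (hP.nonempty ((mem_orderedBlocks hP.1).1 hC))
    rw [List.mem_singleton.1 hD, hb, Finset.min_singleton]
    exact WithTop.coe_lt_coe.2 (hS b (hP.subset ((mem_orderedBlocks hP.1).1 hC)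
      (Finset.mem_of_min hb)))
  · simp [extendPartition, mem_orderedBlocks hP.1, Finset.erase_eq_of_notMem hP.1, or_comm]

lemma orderedBlocks_extendPartition (hP : IsSetPartitionOf S P) (hS : ∀ b ∈ S, b < a)
    {B : Finset (Fin k)} (hB : B ∈ P) :
    orderedBlocks (extendPartition a P B)
      = (orderedBlocks P).map fun C => if C = B then insert a B else C := by
  have hQ := hP.extend (fun h => lt_irrefl a (hS a h)) (Finset.mem_insert_of_mem hB)
  have hmin : ∀ C, (if C = B then insert a B else C).min = C.min := by
    intro C
    split_ifs with hCB
    · rw [hCB]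
      exact Finset.min_insert_of_forall_lt (hP.nonempty hB)
        fun b hb => hS b (hP.subset hB hb)
    · rfl
  refine hQ.orderedBlocks_eq (List.pairwise_map.2 ?_) fun C => ?_
  · simpa only [hmin] using hP.pairwise_orderedBlocks
  simp only [List.mem_map, mem_orderedBlocks hP.1, extendPartition, Finset.mem_insert,
    Finset.mem_erase]
  constructor
  · rintro ⟨D, hD, rfl⟩
    split_ifs with hDB
    exacts [.inl rfl, .inr ⟨hDB, hD⟩]
  · rintro (rfl | ⟨hCB, hC⟩)
    exacts [⟨B, hB, if_pos rfl⟩, ⟨C, hC, if_neg hCB⟩]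

end IsSetPartitionOf

end OrderedBlocks

section Words

variable {B : Finset (Fin k)} {a : Fin k}

lemma nestStar_singleton (m : V →ₗ[K] V →ₗ[K] V) (x : Fin k → V) (a : Fin k) :
    nestStar m x {a} = x a := by
  simp [nestStar]

lemma nestStar_insert_of_forall_lt (m : V →ₗ[K] V →ₗ[K] V) (x : Fin k → V)
    (hB : B.Nonempty) (h : ∀ b ∈ B, b < a) :
    nestStar m x (insert a B) = m (nestStar m x B) (x a) := by
  obtain ⟨c, l, hcl⟩ := List.exists_cons_of_ne_nil (l := B.sort) (by
    rw [Ne, ← List.length_eq_zero_iff, Finset.length_sort]; exact hB.card_pos.ne')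
  simp [nestStar, Finset.sort_insert_of_forall_lt h, hcl]

-- In `partitionWord`, the list `List.finRange k` is coerced to `List (WithTop (Fin k))`.
lemma partitionWord_eq_prod_orderedBlocks (m : V →ₗ[K] V →ₗ[K] V) (x : Fin k → V)
    (P : Finset (Finset (Fin k))) :
    partitionWord m x P
      = ((orderedBlocks P).map fun J => TensorAlgebra.ι K (nestStar m x J)).prod := by
  simp only [partitionWord, orderedBlocks]
  congr 2
  show List.flatMap _ (List.flatMap _ _) = _
  rw [List.flatMap_assoc]
  simp

end Words

section Expansion

variable {S : Finset (Fin k)} {P : Finset (Finset (Fin k))} {a : Fin k}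
  {m : V →ₗ[K] V →ₗ[K] V}
  {star : TensorAlgebra K V →ₗ[K] TensorAlgebra K V →ₗ[K] TensorAlgebra K V}

open TensorAlgebra

lemma IsSetPartitionOf.partitionWord_extendPartition_empty (hP : IsSetPartitionOf S P)
    (hS : ∀ b ∈ S, b < a) (m : V →ₗ[K] V →ₗ[K] V) (x : Fin k → V) :
    partitionWord m x (extendPartition a P ∅) = partitionWord m x P * ι K (x a) := by
  simp [partitionWord_eq_prod_orderedBlocks, hP.orderedBlocks_extendPartition_empty hS,
    nestStar_singleton]

lemma IsMagExt.star_partitionWord (hstar : IsMagExt m star) (hP : IsSetPartitionOf S P)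
    (hS : ∀ b ∈ S, b < a) (x : Fin k → V) :
    star (partitionWord m x P) (ι K (x a))
      = ∑ B ∈ P, partitionWord m x (extendPartition a P B) := by
  rw [partitionWord_eq_prod_orderedBlocks,
    hstar.star_prod_ι (nodup_of_pairwise_min_lt hP.pairwise_orderedBlocks),
    hP.toFinset_orderedBlocks]
  refine Finset.sum_congr rfl fun B hB => ?_
  rw [partitionWord_eq_prod_orderedBlocks, hP.orderedBlocks_extendPartition hS hB, List.map_map]
  congr 1
  refine List.map_congr_left fun C _ => ?_
  by_cases hCB : C = B
  · subst hCB
    simp [nestStar_insert_of_forall_lt m x (hP.nonempty hB) fun b hb => hS b (hP.subset hB hb)]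
  · simp [hCB]

open Classical in
lemma IsMagExt.circLM_sum_partitionWord (hstar : IsMagExt m star) (hS : ∀ b ∈ S, b < a)
    (x : Fin k → V) :
    circLM star (∑ P ∈ Finset.univ.filter (IsSetPartitionOf S), partitionWord m x P) (ι K (x a))
      = ∑ Q ∈ Finset.univ.filter (IsSetPartitionOf (insert a S)), partitionWord m x Q := by
  rw [← sum_setPartitions_insert fun h => lt_irrefl a (hS a h), map_sum, LinearMap.sum_apply]
  refine Finset.sum_congr rfl fun P hP => ?_
  replace hP := (Finset.mem_filter.1 hP).2
  rw [hstar.circLM_ι, hstar.star_partitionWord hP hS, Finset.sum_insert hP.1,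
    hP.partitionWord_extendPartition_empty hS, add_comm]

open Classical in
lemma IsMagExt.foldl_circLM_eq_sum_partitionWord (hstar : IsMagExt m star) (x : Fin k → V)
    {l : List (Fin k)} (hl : l.Pairwise (· < ·)) :
    (l.map fun i => ι K (x i)).foldl (fun acc y => circLM star acc y) 1
      = ∑ P ∈ Finset.univ.filter (IsSetPartitionOf l.toFinset), partitionWord m x P := by
  induction l using List.reverseRecOn with
  | nil =>
    have : Finset.univ.filter (IsSetPartitionOf (∅ : Finset (Fin k))) = {∅} := by
      ext P
      simp [isSetPartitionOf_empty_iff]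
    rw [List.map_nil, List.foldl_nil, List.toFinset_nil, this, Finset.sum_singleton,
      partitionWord_eq_prod_orderedBlocks]
    simp [orderedBlocks, List.flatMap_eq_nil_iff.2]
  | append_singleton l a ih =>
    obtain ⟨hl, -, hlt⟩ := List.pairwise_append.1 hl
    rw [List.map_append, List.foldl_append, ih hl, List.toFinset_append]
    simpa [Finset.union_comm] using
      hstar.circLM_sum_partitionWord (fun b hb => hlt b (List.mem_toFinset.1 hb) a (by simp)) x

end Expansion

open Classical in
/-- `φ_*(x₁⋯x_k) = x₁ ⊛ ⋯ ⊛ x_k = Σ_{P partition of [k]} x_P^*`. -/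
theorem phi_star_partition_formula (m : V →ₗ[K] V →ₗ[K] V)
    (star : TensorAlgebra K V →ₗ[K] TensorAlgebra K V →ₗ[K] TensorAlgebra K V)
    (hstar : IsMagExt m star)
    (φ : TensorAlgebra K V →ₗ[K] TensorAlgebra K V)
    (hφ1 : φ 1 = 1)
    (hφι : ∀ x : V, φ (TensorAlgebra.ι K x) = TensorAlgebra.ι K x)
    (hφm : ∀ f g : TensorAlgebra K V, φ (f * g) = circLM star (φ f) (φ g))
    (x : Fin k → V) :
    (φ ((List.ofFn fun i => TensorAlgebra.ι K (x i)).prod)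
        = ∑ parts ∈ Finset.univ.filter (fun parts => IsSetPartition parts),
            partitionWord m x parts) ∧
    ((List.ofFn fun i => TensorAlgebra.ι K (x i)).foldl (fun acc y => circLM star acc y) 1
        = ∑ parts ∈ Finset.univ.filter (fun parts => IsSetPartition parts),
            partitionWord m x parts) := by
  have hfold := hstar.foldl_circLM_eq_sum_partitionWord x (List.pairwise_lt_finRange k)
  rw [List.toFinset_finRange, ← List.ofFn_eq_map] at hfold
  have hφfix : (List.ofFn fun i => TensorAlgebra.ι K (x i)).map φ
      = List.ofFn fun i => TensorAlgebra.ι K (x i) := by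
    rw [List.map_ofFn]
    exact congrArg List.ofFn (funext fun i => hφι (x i))
  rw [map_prod_eq_foldl_circLM hφ1 hφm, hφfix]
  exact ⟨hfold, hfold⟩

end
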